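/- arXiv:1610.03907 — 3 statements merged into one kernel-verified Lean document; each statement's English description precedes it below -/
import Mathlib

section
/- The simplicial spaces N_*ℰ and N_*ℰ^⊥ (nerves of the topological posets of reducible and strongly reducible pointed ropes) are good simplicial spaces: each degeneracy map is a closed cofibration, its image being a union of connected components. -/
/- Common geometric setup: the ambient space `ℝ¹ × ℝ²`, with the open unit disk `D²`
in the second factor. -/

noncomputable section

open Set Topology unitInterval
open scoped ContDiff

/-- The plane `ℝ²` (containing the open unit disk `D²`). -/
abbrev Plane : Type := EuclideanSpace ℝ (Fin 2)

/-- The ambient space `ℝ¹ × ℝ²`; submanifolds of `ℝ¹ × D²` are subsets of it. -/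
abbrev Amb : Type := ℝ × Plane
/- Ropes: smooth embedded arcs `[0,1] ↪ ℝ¹ × D²(τ)` with endpoints over `0` and `1`,
modulo orientation-preserving reparametrization, following Mostovoy. -/

/-- `ρ` is a smooth embedding on the set `s` (smooth, injective, with nonvanishing
derivative, i.e. an immersion). -/
def SmoothEmbOn (ρ : ℝ → Amb) (s : Set ℝ) : Prop :=
  ContDiffOn ℝ ∞ ρ s ∧ Set.InjOn ρ s ∧ ∀ t ∈ s, derivWithin ρ s t ≠ 0

/-- The (parametrized) rope `ρ` is reducible at `t`: its image meets the plane
`{t} × ℝ²` transversely in exactly one point. -/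
def ParamReducibleAt (ρ : ℝ → Amb) (t : ℝ) : Prop :=
  (∃! u, u ∈ Icc (0:ℝ) 1 ∧ (ρ u).1 = t) ∧
  ∀ u ∈ Icc (0:ℝ) 1, (ρ u).1 = t → derivWithin (fun s => (ρ s).1) (Icc 0 1) u ≠ 0

/-- The (parametrized) rope `ρ` is strongly reducible at `t`: it meets the plane
`{t} × ℝ²` in one point and is a horizontal segment `(t-ε,t+ε) × {q}` nearby. -/
def ParamStronglyReducibleAt (ρ : ℝ → Amb) (t : ℝ) : Prop :=
  (∃! u, u ∈ Icc (0:ℝ) 1 ∧ (ρ u).1 = t) ∧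
  ∃ ε > 0, ∃ q : Plane,
    ρ '' Icc 0 1 ∩ (Ioo (t - ε) (t + ε) ×ˢ (univ : Set Plane)) =
      Ioo (t - ε) (t + ε) ×ˢ ({q} : Set Plane)

/-- The (parametrized) rope `ρ` is strongly reducible at `0`:
`r|_{(-ε,ε)} = r|_{[0,ε)} = [0,ε) × {p₂₃(∂₀r)}` for some `ε > 0`. -/
def ParamStronglyReducibleAtZero (ρ : ℝ → Amb) : Prop :=
  ∃ ε > 0, ∃ q : Plane,
    ρ '' Icc 0 1 ∩ (Iio ε ×ˢ (univ : Set Plane)) = Ico 0 ε ×ˢ ({q} : Set Plane)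

/-- The space of parametrized ropes in `ℝ¹ × D²(τ)`: smooth embeddings of `[0,1]`
whose two boundary points lie on `{0} × D²(τ)` and `{1} × D²(τ)`, topologized as a
subspace of the space of continuous maps. -/
def RopeEmb (τ : ℝ) : Type :=
  {ρ : C(ℝ, Amb) // SmoothEmbOn ρ (Icc 0 1) ∧ (ρ 0).1 = 0 ∧ (ρ 1).1 = 1 ∧
    ∀ t ∈ Icc (0:ℝ) 1, ‖(ρ t).2‖ < τ}

instance (τ : ℝ) : TopologicalSpace (RopeEmb τ) :=
  inferInstanceAs (TopologicalSpace {ρ : C(ℝ, Amb) // _})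

/-- Two parametrized ropes are related if they differ by an orientation-preserving
diffeomorphism of `[0,1]` (an element of `Diff⁺([0,1])`). -/
def ReparamRel (τ : ℝ) (ρ' ρ : RopeEmb τ) : Prop :=
  ∃ φ : ℝ → ℝ, ContDiffOn ℝ ∞ φ (Icc 0 1) ∧ StrictMonoOn φ (Icc 0 1) ∧
    MapsTo φ (Icc 0 1) (Icc 0 1) ∧ φ 0 = 0 ∧ φ 1 = 1 ∧
    (∀ t ∈ Icc (0:ℝ) 1, derivWithin φ (Icc 0 1) t ≠ 0) ∧
    ∀ t ∈ Icc (0:ℝ) 1, ρ'.1 t = ρ.1 (φ t)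

/-- The space of (unparametrized) ropes in `ℝ¹ × D²(τ)`: the quotient
`Emb([0,1], ℝ × D²(τ)) / Diff⁺([0,1])` with the quotient topology. -/
def RopeSpace (τ : ℝ) : Type := Quot (ReparamRel τ)

instance (τ : ℝ) : TopologicalSpace (RopeSpace τ) :=
  inferInstanceAs (TopologicalSpace (Quot _))

namespace RopeSpace

variable {τ : ℝ}

/-- The underlying subset of `ℝ¹ × D²(τ)` of a rope is the image of any parametrization. -/
def HasImage (r : RopeSpace τ) (S : Set Amb) : Prop :=
  ∃ ρ : RopeEmb τ, Quot.mk _ ρ = r ∧ ρ.1 '' Icc 0 1 = S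

/-- A rope is reducible at `t` if it meets `{t} × D²` transversely in one point. -/
def ReducibleAt (r : RopeSpace τ) (t : ℝ) : Prop :=
  ∃ ρ : RopeEmb τ, Quot.mk _ ρ = r ∧ ParamReducibleAt ρ.1 t

/-- Strong reducibility at `t` for unparametrized ropes. -/
def StronglyReducibleAt (r : RopeSpace τ) (t : ℝ) : Prop :=
  ∃ ρ : RopeEmb τ, Quot.mk _ ρ = r ∧ ParamStronglyReducibleAt ρ.1 t

/-- Strong reducibility at `0` for unparametrized ropes. -/
def StronglyReducibleAtZero (r : RopeSpace τ) : Prop :=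
  ∃ ρ : RopeEmb τ, Quot.mk _ ρ = r ∧ ParamStronglyReducibleAtZero ρ.1

/-- A rope is short if its arclength is `< 3`. -/
def Short (r : RopeSpace τ) : Prop :=
  ∃ ρ : RopeEmb τ, Quot.mk _ ρ = r ∧ eVariationOn ρ.1 (Icc 0 1) < 3

/-- A rope has the standard endpoints `(0,0,0)` and `(1,0,0)`. -/
def StdEndpoints (r : RopeSpace τ) : Prop :=
  ∃ ρ : RopeEmb τ, Quot.mk _ ρ = r ∧ ρ.1 0 = ((0:ℝ), (0:Plane)) ∧ ρ.1 1 = ((1:ℝ), (0:Plane))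

end RopeSpace

/-- The space `R(τ)` of reducible ropes: ropes in `ℝ¹ × D²(τ)` that are reducible at
some `t ∈ (0,1)`, topologized as a subspace of `Emb([0,1], ℝ×D²(τ))/Diff⁺([0,1])`. -/
def RSpace (τ : ℝ) : Type :=
  {r : RopeSpace τ // ∃ t ∈ Ioo (0:ℝ) 1, r.ReducibleAt t}

instance (τ : ℝ) : TopologicalSpace (RSpace τ) :=
  inferInstanceAs (TopologicalSpace {r : RopeSpace τ // _})
/- Nerves and classifying spaces of topological posets of the form
`{(t, x) ∈ ℝ × X | P t x}`, ordered by `(t,x) ≤ (t',x') ↔ x = x' ∧ t ≤ t'`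
(this covers the posets `𝒟`, `𝒟^⊥`, `ℰ`, `ℰ^⊥` of the paper). -/

/-- The standard `l`-simplex `Δ^l = {λ ∈ [0,1]^{l+1} | ∑ λᵢ = 1}`. -/
abbrev SimpT (l : ℕ) : Type := ↥(stdSimplex ℝ (Fin (l + 1)))

/-- Push-forward of barycentric coordinates along a map of index sets; used for the
cofaces `δ_i = pushSimplex (Fin.succAbove i)` and codegeneracies
`σ_i = pushSimplex (Fin.predAbove i)` of the standard simplices. -/
def pushSimplex {n m : ℕ} (g : Fin n → Fin m) (lam : stdSimplex ℝ (Fin n)) :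
    stdSimplex ℝ (Fin m) :=
  ⟨fun j => ∑ k : Fin n, if g k = j then lam.1 k else 0, by
    constructor
    · intro j
      exact Finset.sum_nonneg fun k _ => by
        by_cases h : g k = j <;> simp [h, lam.2.1 k]
    · rw [Finset.sum_comm]
      simp only [Finset.sum_ite_eq, Finset.mem_univ, if_true]
      exact lam.2.2⟩

/-- The space of `l`-simplices of the nerve of the topological poset determined by
`P : ℝ → X → Prop`: sequences `(t₀ ≤ … ≤ t_l; x)` with `P tᵢ x` for every `i`. -/
structure NervP {X : Type} [TopologicalSpace X] (P : ℝ → X → Prop) (l : ℕ) : Type where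
  times : Fin (l + 1) → ℝ
  pt : X
  mono : Monotone times
  mem : ∀ i, P (times i) pt

/-- The topology on the nerve: the subspace topology from `ℝ^{l+1} × X`, refined so
that identity morphisms form disjoint components (i.e. the subspace topology from
`(Δ ⊔ (ℝ×ℝ∖Δ)) × X` on consecutive pairs, recorded by the Boolean pattern of
equalities `tᵢ = tᵢ₊₁`). -/
instance NervP.instTop {X : Type} [TopologicalSpace X] (P : ℝ → X → Prop) (l : ℕ) :
    TopologicalSpace (NervP P l) := by
  classical
  exact TopologicalSpace.induced
    (fun sg => (sg.times, sg.pt,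
      fun i : Fin l => if sg.times i.castSucc = sg.times i.succ then true else false))
    inferInstance

/-- The `i`-th face map of the nerve of a topological poset (deleting `tᵢ`). -/
def NervP.face {X : Type} [TopologicalSpace X] {P : ℝ → X → Prop} {l : ℕ}
    (i : Fin (l + 2)) (sg : NervP P (l + 1)) : NervP P l where
  times := sg.times ∘ i.succAbove
  pt := sg.pt
  mono := sg.mono.comp (Fin.strictMono_succAbove i).monotone
  mem := fun j => sg.mem (i.succAbove j)

/-- The `i`-th degeneracy map of the nerve of a topological poset (repeating `tᵢ`,
i.e. inserting an identity morphism). -/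
def NervP.degen {X : Type} [TopologicalSpace X] {P : ℝ → X → Prop} {l : ℕ}
    (i : Fin (l + 1)) (sg : NervP P l) : NervP P (l + 1) where
  times := sg.times ∘ i.predAbove
  pt := sg.pt
  mono := sg.mono.comp (Fin.predAbove_right_monotone i)
  mem := fun j => sg.mem (i.predAbove j)

/-- The total space `⨆ l, N_l × Δ^l` underlying the geometric realization. -/
def SigNerveP {X : Type} [TopologicalSpace X] (P : ℝ → X → Prop) : Type :=
  Σ l : ℕ, NervP P l × SimpT l

instance {X : Type} [TopologicalSpace X] (P : ℝ → X → Prop) :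
    TopologicalSpace (SigNerveP P) :=
  inferInstanceAs (TopologicalSpace (Σ l : ℕ, NervP P l × SimpT l))

/-- The gluing relation of the geometric realization:
`(d_i σ, λ) ∼ (σ, δ_i λ)` and `(s_i σ, μ) ∼ (σ, σ_i μ)`. -/
def RelP {X : Type} [TopologicalSpace X] (P : ℝ → X → Prop) :
    SigNerveP P → SigNerveP P → Prop := fun a b =>
  (∃ (l : ℕ) (i : Fin (l + 2)) (sg : NervP P (l + 1)) (lam : SimpT l),
      a = ⟨l, (sg.face i, lam)⟩ ∧
      b = ⟨l + 1, (sg, pushSimplex i.succAbove lam)⟩) ∨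
  (∃ (l : ℕ) (i : Fin (l + 1)) (sg : NervP P l) (mu : SimpT (l + 1)),
      a = ⟨l + 1, (sg.degen i, mu)⟩ ∧
      b = ⟨l, (sg, pushSimplex i.predAbove mu)⟩)

/-- The classifying space `B P` of the topological poset determined by `P`:
the geometric realization of its nerve. -/
def BPoset {X : Type} [TopologicalSpace X] (P : ℝ → X → Prop) : Type :=
  Quot (RelP P)

instance {X : Type} [TopologicalSpace X] (P : ℝ → X → Prop) :
    TopologicalSpace (BPoset P) :=
  inferInstanceAs (TopologicalSpace (Quot _))
/- The topological posets `ℰ` and `ℰ^⊥` of pointed (strongly) reducible ropes. -/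

/-- The poset `ℰ`: pairs `(t, r) ∈ (0,1) × R` with `r` reducible at `t`. -/
def EPred : ℝ → RSpace 1 → Prop := fun t r => t ∈ Ioo (0:ℝ) 1 ∧ r.1.ReducibleAt t

/-- The subposet `ℰ^⊥ ⊆ ℰ`: pairs `(t, r)` with `r` strongly reducible at `t`. -/
def EPerpPred : ℝ → RSpace 1 → Prop := fun t r =>
  (t ∈ Ioo (0:ℝ) 1 ∧ r.1.ReducibleAt t) ∧ r.1.StronglyReducibleAt t
/- Closed cofibrations and "union of connected components". -/

/-- `j : A → X` is a closed cofibration: a closed embedding with the homotopy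
extension property. -/
def IsClosedCofibration {A X : Type} [TopologicalSpace A] [TopologicalSpace X]
    (j : A → X) : Prop :=
  IsClosedEmbedding j ∧
  ∀ (Y : Type) [TopologicalSpace Y] (h : C(X, Y)) (H : C(A × I, Y)),
    (∀ a, H (a, 0) = h (j a)) →
    ∃ G : C(X × I, Y), (∀ x, G (x, 0) = h x) ∧ ∀ a t, G (j a, t) = H (a, t)

/-- The image of `f` is a union of connected components of the target. -/
def ImageUnionOfComponents {A X : Type} [TopologicalSpace X] (f : A → X) : Prop :=
  ∀ y ∈ Set.range f, connectedComponent y ⊆ Set.range f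

/-!
STATEMENT 5: The simplicial spaces `N_*ℰ` and `N_*ℰ^⊥` (nerves of the topological
posets of reducible and strongly reducible pointed ropes) are good: each degeneracy
map is a closed cofibration, its image being a union of connected components.
-/

section GoodAux
variable {X : Type} [TopologicalSpace X] {P : ℝ → X → Prop}

private def nervKey (P : ℝ → X → Prop) (l : ℕ) :
    NervP P l → (Fin (l + 1) → ℝ) × X × (Fin l → Bool) := fun sg =>
  (sg.times, sg.pt,
    fun i : Fin l => if sg.times i.castSucc = sg.times i.succ then true else false)

private lemma nervKey_inducing (l : ℕ) : IsInducing (nervKey P l) := ⟨rfl⟩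

private lemma cont_times (l : ℕ) : Continuous (fun sg : NervP P l => sg.times) :=
  continuous_fst.comp (nervKey_inducing l).continuous

private lemma cont_pt (l : ℕ) : Continuous (fun sg : NervP P l => sg.pt) :=
  continuous_fst.comp (continuous_snd.comp (nervKey_inducing l).continuous)

private lemma cont_patt (l : ℕ) (k : Fin l) :
    Continuous (fun sg : NervP P l =>
      if sg.times k.castSucc = sg.times k.succ then true else false) :=
  (continuous_apply k).comp
    (continuous_snd.comp (continuous_snd.comp (nervKey_inducing l).continuous))

private lemma cont_eqtest (l : ℕ) : ∀ (n : ℕ) (a b : Fin (l + 1)), a.val ≤ b.val →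
    b.val - a.val = n →
    Continuous (fun sg : NervP P l => if sg.times a = sg.times b then true else false) := by
  intro n
  induction n with
  | zero =>
    intro a b hab h0
    have : a = b := Fin.ext (le_antisymm hab (by omega))
    subst this
    simpa using continuous_const (y := true)
  | succ n ih =>
    intro a b hab hn
    have hbl : b.val < l + 1 := b.isLt
    have hal : a.val < l := by omega
    set k : Fin l := ⟨a.val, hal⟩ with hk
    have ha : a = k.castSucc := by ext; rfl
    have hks : (k.succ : Fin (l + 1)).val = a.val + 1 := rfl
    have key : (fun sg : NervP P l => if sg.times a = sg.times b then true else false)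
        = fun sg => ((if sg.times k.castSucc = sg.times k.succ then true else false) &&
                     (if sg.times k.succ = sg.times b then true else false)) := by
      funext sg
      have h1 : sg.times a ≤ sg.times k.succ := sg.mono (by rw [Fin.le_def]; omega)
      have h2 : sg.times k.succ ≤ sg.times b := sg.mono (by rw [Fin.le_def]; omega)
      by_cases hab' : sg.times a = sg.times b
      · have e1 : sg.times a = sg.times k.succ := le_antisymm h1 (hab' ▸ h2)
        have e2 : sg.times k.succ = sg.times b := by rw [← e1, hab']
        rw [← ha] at *
        simp [hab', e1, e2, ← e1]
      · by_cases e1 : sg.times k.castSucc = sg.times k.succ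
        · have e2 : ¬ sg.times k.succ = sg.times b := by
            rw [← ha] at e1; rw [← e1]; exact hab'
          simp [hab', e1, e2]
        · simp [hab', e1]
    rw [key]
    have c1 := cont_patt (P := P) l k
    have c2 := ih k.succ b (by omega) (by omega)
    have hand : Continuous (fun p : Bool × Bool => p.1 && p.2) := continuous_of_discreteTopology
    exact hand.comp (c1.prodMk c2)

end GoodAux
section GoodAux2
variable {X : Type} [TopologicalSpace X] {P : ℝ → X → Prop}

private lemma NervP.ext' {l : ℕ} {a b : NervP P l} (ht : a.times = b.times)
    (hp : a.pt = b.pt) : a = b := by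
  cases a; cases b; cases ht; cases hp; rfl

private lemma cont_degen (l : ℕ) (i : Fin (l + 1)) :
    Continuous (NervP.degen (P := P) i) := by
  rw [(nervKey_inducing (P := P) (l + 1)).continuous_iff]
  refine Continuous.prodMk ?_ (Continuous.prodMk ?_ ?_)
  · exact continuous_pi fun j => (continuous_apply (i.predAbove j)).comp (cont_times l)
  · exact cont_pt l
  · refine continuous_pi fun j => ?_
    have hmono : (i.predAbove j.castSucc).val ≤ (i.predAbove j.succ).val :=
      Fin.predAbove_right_monotone i (Fin.castSucc_le_succ j)
    exact cont_eqtest l _ (i.predAbove j.castSucc) (i.predAbove j.succ) hmono rfl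

private lemma cont_face (l : ℕ) (p : Fin (l + 2)) :
    Continuous (NervP.face (P := P) p) := by
  rw [(nervKey_inducing (P := P) l).continuous_iff]
  refine Continuous.prodMk ?_ (Continuous.prodMk ?_ ?_)
  · exact continuous_pi fun j => (continuous_apply (p.succAbove j)).comp (cont_times (l+1))
  · exact cont_pt (l+1)
  · refine continuous_pi fun j => ?_
    have hmono : (p.succAbove j.castSucc).val ≤ (p.succAbove j.succ).val :=
      (Fin.strictMono_succAbove p).monotone (Fin.castSucc_le_succ j)
    exact cont_eqtest (l+1) _ (p.succAbove j.castSucc) (p.succAbove j.succ) hmono rfl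

private lemma face_degen (l : ℕ) (i : Fin (l + 1)) (sg : NervP P l) :
    NervP.face i.castSucc (NervP.degen i sg) = sg := by
  refine NervP.ext' (funext fun j => ?_) rfl
  show sg.times (i.predAbove (i.castSucc.succAbove j)) = sg.times j
  rw [Fin.predAbove_succAbove]

private lemma range_degen (l : ℕ) (i : Fin (l + 1)) :
    Set.range (NervP.degen (P := P) i) =
      {sg : NervP P (l + 1) | sg.times i.castSucc = sg.times i.succ} := by
  ext sg
  constructor
  · rintro ⟨x, rfl⟩
    show x.times (i.predAbove i.castSucc) = x.times (i.predAbove i.succ)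
    rw [Fin.predAbove_castSucc_self, Fin.predAbove_succ_self]
  · intro h
    refine ⟨NervP.face i.castSucc sg, NervP.ext' (funext fun j => ?_) rfl⟩
    show sg.times (i.castSucc.succAbove (i.predAbove j)) = sg.times j
    by_cases hj : j = i.castSucc
    · subst hj
      rw [Fin.predAbove_castSucc_self]
      have : i.castSucc.succAbove i = i.succ := by
        rw [Fin.succAbove_of_le_castSucc _ _ le_rfl]
      rw [this]
      exact h.symm
    · rw [Fin.succAbove_predAbove hj]

private lemma degen_section (l : ℕ) (i : Fin (l + 1)) (sg : NervP P (l + 1))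
    (h : sg.times i.castSucc = sg.times i.succ) :
    NervP.degen i (NervP.face i.castSucc sg) = sg := by
  obtain ⟨x, hx⟩ : sg ∈ Set.range (NervP.degen (P := P) i) := by
    rw [range_degen]; exact h
  rw [← hx, face_degen]

private lemma clopen_range_degen (l : ℕ) (i : Fin (l + 1)) :
    IsClopen (Set.range (NervP.degen (P := P) i)) := by
  rw [range_degen]
  have hc := cont_patt (P := P) (l + 1) i
  have : {sg : NervP P (l + 1) | sg.times i.castSucc = sg.times i.succ} =
      (fun sg : NervP P (l + 1) =>
        if sg.times i.castSucc = sg.times i.succ then true else false) ⁻¹' {true} := by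
    ext sg
    by_cases h : sg.times i.castSucc = sg.times i.succ <;> simp [h]
  rw [this]
  exact (isClopen_discrete {true}).preimage hc

end GoodAux2
section GoodAux3
variable {X : Type} [TopologicalSpace X] {P : ℝ → X → Prop}

private lemma degen_good (l : ℕ) (i : Fin (l + 1)) :
    IsClosedCofibration (NervP.degen (P := P) i) ∧
      ImageUnionOfComponents (NervP.degen (P := P) i) := by
  classical
  set j := NervP.degen (P := P) i with hj
  set r := NervP.face (P := P) i.castSucc with hr
  have hrj : ∀ sg, r (j sg) = sg := face_degen l i
  have hclopen := clopen_range_degen (P := P) l i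
  have hjr : ∀ x ∈ Set.range j, j (r x) = x := by
    intro x hx
    rw [range_degen] at hx
    exact degen_section l i x hx
  have hinj : Function.Injective j := Function.LeftInverse.injective hrj
  have hind : IsInducing j := by
    refine IsInducing.of_comp (cont_degen l i) (cont_face l i.castSucc) ?_
    have heq : r ∘ j = id := funext hrj
    show IsInducing (r ∘ j)
    rw [heq]
    exact IsInducing.id
  have hce : IsClosedEmbedding j := ⟨⟨hind, hinj⟩, hclopen.isClosed⟩
  constructor
  · refine ⟨hce, ?_⟩
    intro Y _ h H hH0
    refine ⟨⟨fun xt => if xt.1 ∈ Set.range j then H (r xt.1, xt.2) else h xt.1, ?_⟩, ?_, ?_⟩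
    · apply Continuous.if
      · intro a ha
        have : frontier {xt : NervP P (l+1) × I | xt.1 ∈ Set.range j} = ∅ := by
          have : {xt : NervP P (l+1) × I | xt.1 ∈ Set.range j}
              = Prod.fst ⁻¹' Set.range j := rfl
          rw [this]
          exact (hclopen.preimage continuous_fst).frontier_eq
        rw [this] at ha
        exact absurd ha (Set.notMem_empty a)
      · exact H.continuous.comp
          (((cont_face l i.castSucc).comp continuous_fst).prodMk continuous_snd)
      · exact h.continuous.comp continuous_fst
    · intro x
      by_cases hx : x ∈ Set.range j
      · show (if x ∈ Set.range j then H (r x, 0) else h x) = h x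
        rw [if_pos hx, hH0 (r x), hjr x hx]
      · show (if x ∈ Set.range j then H (r x, 0) else h x) = h x
        rw [if_neg hx]
    · intro a t
      have hx : j a ∈ Set.range j := Set.mem_range_self a
      show (if j a ∈ Set.range j then H (r (j a), t) else h (j a)) = H (a, t)
      rw [if_pos hx, hrj]
  · intro y hy
    exact hclopen.connectedComponent_subset hy

end GoodAux3

theorem nerves_of_E_Eperp_are_good :
    (∀ (l : ℕ) (i : Fin (l + 1)),
      IsClosedCofibration (NervP.degen (P := EPred) i) ∧
        ImageUnionOfComponents (NervP.degen (P := EPred) i)) ∧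
    (∀ (l : ℕ) (i : Fin (l + 1)),
      IsClosedCofibration (NervP.degen (P := EPerpPred) i) ∧
        ImageUnionOfComponents (NervP.degen (P := EPerpPred) i)) :=
  ⟨fun l i => degen_good l i, fun l i => degen_good l i⟩
end
end

section
/- The inclusion W' ↪ W is a homotopy equivalence, where W is the space of ropes strongly reducible at 0 and W' ⊂ W is the subspace of ropes r with endpoints ∂₀r = (0,0,0) and ∂₁r = (1,0,0). A homotopy inverse is given by r ↦ Ξ_r(r), where Ξ_r(x,(y,z)) = (x, ξ_{−(1−b(x))p₂₃(∂₀r) − b(x)p₂₃(∂₁r)}(y,z)), with ξ_p(v) = (v + p)/2 and b a smooth monotone function with b = 0 on (−∞,1/3) and b = 1 on (2/3,∞). -/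
/- Common geometric setup: the ambient space `ℝ¹ × ℝ²`, with the open unit disk `D²`
in the second factor. -/

noncomputable section

open Set Topology unitInterval
open scoped ContDiff

/- The cut-off map and the endpoint-centering shrinking map. -/

/-- The orientation-preserving diffeomorphism `f : (0,1) ≅ ℝ`, `f(t) = tan π(t-1/2)`. -/
def ftan (t : ℝ) : ℝ := Real.tan (Real.pi * (t - 1 / 2))

/-- The cut-off map on subsets: `c(r) = (f × id_{D²})(r|_{(0,1)})`. -/
def cutSet (S : Set Amb) : Set Amb :=
  (fun x : Amb => ((ftan x.1, x.2) : Amb)) '' (S ∩ (Ioo (0:ℝ) 1 ×ˢ (univ : Set Plane)))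

/-- The shrinking map `Ξ_r` of Mostovoy/the paper: for a rope with endpoint planes
`p₀ = p₂₃(∂₀ r)` and `p₁ = p₂₃(∂₁ r)`,
`Ξ(x,(y,z)) = (x, ξ_{-(1-b(x))p₀ - b(x)p₁}(y,z))` where `ξ_p(v) = (v+p)/2`. -/
def XiFun (p0 p1 : Plane) (b : ℝ → ℝ) (x : Amb) : Amb :=
  (x.1, (2:ℝ)⁻¹ • (x.2 + (-((1 - b x.1) • p0) - b x.1 • p1)))

/-- The conditions on the auxiliary bump function `b`: smooth, monotone, `b = 0` on
`(-∞, 1/3)` and `b = 1` on `(2/3, ∞)`. -/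
def IsBump (b : ℝ → ℝ) : Prop :=
  ContDiff ℝ ∞ b ∧ Monotone b ∧ (∀ x < (1:ℝ)/3, b x = 0) ∧ ∀ x > (2:ℝ)/3, b x = 1

/-!
STATEMENT 8: The inclusion `W' ↪ W` is a homotopy equivalence, where `W` is the
space of ropes strongly reducible at `0` and `W' ⊆ W` is the subspace of ropes with
endpoints `(0,0,0)` and `(1,0,0)`.  A homotopy inverse is given by `r ↦ Ξ_r(r)`,
where `Ξ_r(x,(y,z)) = (x, ξ_{-(1-b(x))p₂₃(∂₀r) - b(x)p₂₃(∂₁r)}(y,z))`,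
`ξ_p(v) = (v+p)/2`, and `b` is a smooth monotone function with `b = 0` on
`(-∞,1/3)` and `b = 1` on `(2/3,∞)`.
-/

/-- The subspace `W` of `R` of ropes strongly reducible at `0`. -/
def WSpace : Type := {r : RSpace 1 // r.1.StronglyReducibleAtZero}

instance : TopologicalSpace WSpace :=
  inferInstanceAs (TopologicalSpace {r : RSpace 1 // _})

/-- The subspace `W' ⊆ W` of ropes with endpoints `(0,0,0)` and `(1,0,0)`. -/
def WPrime : Type := {w : WSpace // w.1.1.StdEndpoints}

instance : TopologicalSpace WPrime :=
  inferInstanceAs (TopologicalSpace {w : WSpace // _})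

/-- The inclusion `W' ↪ W`. -/
def WInclusion : C(WPrime, WSpace) := ⟨Subtype.val, continuous_subtype_val⟩

namespace Stmt8

variable {b : ℝ → ℝ}

lemma bump_nonneg (hb : IsBump b) (x : ℝ) : 0 ≤ b x := by
  have h0 : b (min x 0) = 0 := hb.2.2.1 _ (by have := min_le_right x 0; linarith)
  have := hb.2.1 (min_le_left x 0)
  linarith

lemma bump_le_one (hb : IsBump b) (x : ℝ) : b x ≤ 1 := by
  have h1 : b (max x 1) = 1 := hb.2.2.2 _ (by have := le_max_right x 1; linarith)
  have := hb.2.1 (le_max_left x 1)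
  linarith

/-- The translation vector `-(1-b x) • p0 - b x • p1`. -/
def cfun (b : ℝ → ℝ) (p0 p1 : Plane) (x : ℝ) : Plane := -((1 - b x) • p0) - b x • p1

lemma cfun_contDiff (hb : IsBump b) (p0 p1 : Plane) : ContDiff ℝ ∞ (cfun b p0 p1) := by
  unfold cfun
  exact (((contDiff_const.sub hb.1).smul contDiff_const).neg).sub (hb.1.smul contDiff_const)

lemma cfun_norm_lt (hb : IsBump b) {p0 p1 : Plane} (h0 : ‖p0‖ < 1) (h1 : ‖p1‖ < 1) (x : ℝ) :
    ‖cfun b p0 p1 x‖ < 1 := by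
  have hbx0 := bump_nonneg hb x
  have hbx1 := bump_le_one hb x
  have hle : ‖cfun b p0 p1 x‖ ≤ (1 - b x) * ‖p0‖ + b x * ‖p1‖ := by
    unfold cfun
    calc ‖-((1 - b x) • p0) - b x • p1‖ ≤ ‖-((1 - b x) • p0)‖ + ‖b x • p1‖ := norm_sub_le _ _
    _ = (1 - b x) * ‖p0‖ + b x * ‖p1‖ := by
        rw [norm_neg, norm_smul, norm_smul, Real.norm_eq_abs, Real.norm_eq_abs,
          abs_of_nonneg (by linarith), abs_of_nonneg hbx0]
  have hM : (1 - b x) * ‖p0‖ + b x * ‖p1‖ ≤ max ‖p0‖ ‖p1‖ := by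
    have g1 : (1 - b x) * ‖p0‖ ≤ (1 - b x) * max ‖p0‖ ‖p1‖ :=
      mul_le_mul_of_nonneg_left (le_max_left _ _) (by linarith)
    have g2 : b x * ‖p1‖ ≤ b x * max ‖p0‖ ‖p1‖ :=
      mul_le_mul_of_nonneg_left (le_max_right _ _) hbx0
    nlinarith
  have := max_lt h0 h1
  linarith

/-- The time-`s` partial shrinking map. At `s = 0` it is `XiFun`, at `s = 1` the identity. -/
def XiS (b : ℝ → ℝ) (p0 p1 : Plane) (s : ℝ) (x : Amb) : Amb :=
  (x.1, (1 - (1 - s) / 2) • x.2 + ((1 - s) / 2) • cfun b p0 p1 x.1)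

lemma XiS_fst (p0 p1 : Plane) (s : ℝ) (x : Amb) : (XiS b p0 p1 s x).1 = x.1 := rfl

lemma XiS_snd (p0 p1 : Plane) (s : ℝ) (x : Amb) :
    (XiS b p0 p1 s x).2 = (1 - (1 - s) / 2) • x.2 + ((1 - s) / 2) • cfun b p0 p1 x.1 := rfl

lemma XiS_zero (p0 p1 : Plane) (y : Amb) : XiS b p0 p1 0 y = XiFun p0 p1 b y := by
  unfold XiS XiFun cfun
  refine Prod.ext rfl ?_
  show (1 - (1 - (0:ℝ)) / 2) • y.2 + ((1 - (0:ℝ)) / 2) • (-((1 - b y.1) • p0) - b y.1 • p1)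
      = (2:ℝ)⁻¹ • (y.2 + (-((1 - b y.1) • p0) - b y.1 • p1))
  module

lemma XiS_one (p0 p1 : Plane) (y : Amb) : XiS b p0 p1 1 y = y := by
  unfold XiS
  refine Prod.ext rfl ?_
  show (1 - (1 - (1:ℝ)) / 2) • y.2 + ((1 - (1:ℝ)) / 2) • cfun b p0 p1 y.1 = y.2
  module

lemma XiS_contDiff (hb : IsBump b) (p0 p1 : Plane) (s : ℝ) :
    ContDiff ℝ ∞ (XiS b p0 p1 s) := by
  unfold XiS
  exact contDiff_fst.prodMk (((contDiff_const (c := 1 - (1 - s) / 2)).smul contDiff_snd).add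
    ((contDiff_const (c := (1 - s) / 2)).smul ((cfun_contDiff hb p0 p1).comp contDiff_fst)))

lemma XiS_cont4 (hb : IsBump b) :
    Continuous fun q : (Plane × Plane) × ℝ × Amb => XiS b q.1.1 q.1.2 q.2.1 q.2.2 := by
  have hbc : Continuous b := hb.1.continuous
  unfold XiS cfun
  fun_prop

lemma XiS_hasDeriv (hb : IsBump b) (p0 p1 : Plane) (s : ℝ)
    {ρ : ℝ → Amb} {t : ℝ} {d : Amb}
    (hd : HasDerivWithinAt ρ d (Icc 0 1) t) :
    HasDerivWithinAt (fun u => XiS b p0 p1 s (ρ u))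
      (d.1, (1 - (1 - s) / 2) • d.2 +
        ((1 - s) / 2) • (d.1 • deriv (cfun b p0 p1) ((ρ t).1))) (Icc 0 1) t := by
  have h1 : HasDerivWithinAt (fun u => (ρ u).1) d.1 (Icc 0 1) t := by
    exact hasFDerivAt_fst.comp_hasDerivWithinAt t hd
  have h2 : HasDerivWithinAt (fun u => (ρ u).2) d.2 (Icc 0 1) t := by
    exact hasFDerivAt_snd.comp_hasDerivWithinAt t hd
  have hc : HasDerivAt (cfun b p0 p1) (deriv (cfun b p0 p1) ((ρ t).1)) ((ρ t).1) :=
    (((cfun_contDiff hb p0 p1).differentiable (by norm_num)) _).hasDerivAt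
  have h3 : HasDerivWithinAt (fun u => cfun b p0 p1 ((ρ u).1))
      (d.1 • deriv (cfun b p0 p1) ((ρ t).1)) (Icc 0 1) t :=
    by have := HasDerivAt.scomp_hasDerivWithinAt t hc h1; exact this
  exact h1.prodMk ((h2.const_smul (1 - (1 - s) / 2)).add (h3.const_smul ((1 - s) / 2)))

lemma FF_mem (hb : IsBump b) (ρ : RopeEmb 1) (s : I) :
    SmoothEmbOn (fun t => XiS b (ρ.1 0).2 (ρ.1 1).2 (s:ℝ) (ρ.1 t)) (Icc 0 1) ∧
    ((fun t => XiS b (ρ.1 0).2 (ρ.1 1).2 (s:ℝ) (ρ.1 t)) 0).1 = 0 ∧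
    ((fun t => XiS b (ρ.1 0).2 (ρ.1 1).2 (s:ℝ) (ρ.1 t)) 1).1 = 1 ∧
    ∀ t ∈ Icc (0:ℝ) 1, ‖((fun t => XiS b (ρ.1 0).2 (ρ.1 1).2 (s:ℝ) (ρ.1 t)) t).2‖ < 1 := by
  obtain ⟨⟨hsm, hinj, hder⟩, h0, h1, hnorm⟩ := ρ.2
  have hs0 : (0:ℝ) ≤ (s:ℝ) := s.2.1
  have hs1 : (s:ℝ) ≤ 1 := s.2.2
  have hμ0 : (0:ℝ) ≤ (1 - (s:ℝ)) / 2 := by linarith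
  have hμh : (1 - (s:ℝ)) / 2 ≤ 1/2 := by linarith
  have h1μ : (1:ℝ) - (1 - (s:ℝ)) / 2 ≠ 0 := by intro h; linarith
  refine ⟨⟨?_, ?_, ?_⟩, ?_, ?_, ?_⟩
  · exact (XiS_contDiff hb _ _ _).comp_contDiffOn hsm
  · intro t ht t' ht' h
    have hf : (ρ.1 t).1 = (ρ.1 t').1 := by
      simpa only [XiS_fst] using congrArg Prod.fst h
    have hsnd : (1 - (1 - (s:ℝ)) / 2) • (ρ.1 t).2
          + ((1 - (s:ℝ)) / 2) • cfun b (ρ.1 0).2 (ρ.1 1).2 (ρ.1 t).1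
        = (1 - (1 - (s:ℝ)) / 2) • (ρ.1 t').2
          + ((1 - (s:ℝ)) / 2) • cfun b (ρ.1 0).2 (ρ.1 1).2 (ρ.1 t').1 := by
      simpa only [XiS_snd] using congrArg Prod.snd h
    rw [hf] at hsnd
    have hv : (ρ.1 t).2 = (ρ.1 t').2 :=
      smul_right_injective Plane h1μ (add_right_cancel hsnd)
    exact hinj ht ht' (Prod.ext hf hv)
  · intro t ht
    have hdiff : DifferentiableWithinAt ℝ ρ.1 (Icc 0 1) t :=
      (hsm.differentiableOn (by norm_num)) t ht
    have hD := XiS_hasDeriv hb (ρ.1 0).2 (ρ.1 1).2 (s:ℝ) hdiff.hasDerivWithinAt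
    rw [hD.derivWithin ((uniqueDiffOn_Icc zero_lt_one) t ht)]
    intro hzero
    have hz1 : (derivWithin ρ.1 (Icc 0 1) t).1 = 0 := by
      simpa using congrArg Prod.fst hzero
    have hz2 : (1 - (1 - (s:ℝ)) / 2) • (derivWithin ρ.1 (Icc 0 1) t).2 +
        ((1 - (s:ℝ)) / 2) • ((derivWithin ρ.1 (Icc 0 1) t).1 •
          deriv (cfun b (ρ.1 0).2 (ρ.1 1).2) ((ρ.1 t).1)) = 0 := by
      simpa using congrArg Prod.snd hzero
    rw [hz1, zero_smul, smul_zero, add_zero] at hz2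
    have hz3 : (derivWithin ρ.1 (Icc 0 1) t).2 = 0 := by
      rcases smul_eq_zero.1 hz2 with h | h
      · exact absurd h h1μ
      · exact h
    exact hder t ht (Prod.ext hz1 hz3)
  · exact h0
  · exact h1
  · intro t ht
    have hv := hnorm t ht
    have hc := cfun_norm_lt hb (hnorm 0 ⟨le_rfl, zero_le_one⟩) (hnorm 1 ⟨zero_le_one, le_rfl⟩)
      ((ρ.1 t).1)
    show ‖(1 - (1 - (s:ℝ)) / 2) • (ρ.1 t).2
        + ((1 - (s:ℝ)) / 2) • cfun b (ρ.1 0).2 (ρ.1 1).2 (ρ.1 t).1‖ < 1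
    calc ‖(1 - (1 - (s:ℝ)) / 2) • (ρ.1 t).2
          + ((1 - (s:ℝ)) / 2) • cfun b (ρ.1 0).2 (ρ.1 1).2 (ρ.1 t).1‖
        ≤ ‖(1 - (1 - (s:ℝ)) / 2) • (ρ.1 t).2‖
          + ‖((1 - (s:ℝ)) / 2) • cfun b (ρ.1 0).2 (ρ.1 1).2 (ρ.1 t).1‖ := norm_add_le _ _
      _ = (1 - (1 - (s:ℝ)) / 2) * ‖(ρ.1 t).2‖
          + ((1 - (s:ℝ)) / 2) * ‖cfun b (ρ.1 0).2 (ρ.1 1).2 (ρ.1 t).1‖ := by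
          rw [norm_smul, norm_smul, Real.norm_eq_abs, Real.norm_eq_abs,
            abs_of_nonneg (by linarith), abs_of_nonneg hμ0]
      _ < 1 := by
          nlinarith [norm_nonneg (ρ.1 t).2,
            norm_nonneg (cfun b (ρ.1 0).2 (ρ.1 1).2 (ρ.1 t).1),
            mul_pos (by linarith : (0:ℝ) < 1 - (1 - (s:ℝ)) / 2)
              (by linarith : (0:ℝ) < 1 - ‖(ρ.1 t).2‖),
            mul_nonneg hμ0
              (by linarith : (0:ℝ) ≤ 1 - ‖cfun b (ρ.1 0).2 (ρ.1 1).2 (ρ.1 t).1‖)]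

/-- The time-`s` shrinking map on parametrized ropes. -/
def FF (hb : IsBump b) (ρ : RopeEmb 1) (s : I) : RopeEmb 1 :=
  ⟨⟨fun t => XiS b (ρ.1 0).2 (ρ.1 1).2 (s:ℝ) (ρ.1 t),
    ((XiS_contDiff hb _ _ _).continuous).comp ρ.1.continuous⟩, FF_mem hb ρ s⟩

lemma FF_coe (hb : IsBump b) (ρ : RopeEmb 1) (s : I) (t : ℝ) :
    (FF hb ρ s).1 t = XiS b (ρ.1 0).2 (ρ.1 1).2 (s:ℝ) (ρ.1 t) := rfl

lemma FF_rel (hb : IsBump b) {ρ' ρ : RopeEmb 1} (h : ReparamRel 1 ρ' ρ) (s : I) :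
    ReparamRel 1 (FF hb ρ' s) (FF hb ρ s) := by
  obtain ⟨φ, hφ1, hφ2, hφ3, hφ0, hφone, hφd, hφeq⟩ := h
  refine ⟨φ, hφ1, hφ2, hφ3, hφ0, hφone, hφd, ?_⟩
  intro t ht
  have h0 : ρ'.1 0 = ρ.1 0 := by
    have := hφeq 0 ⟨le_refl 0, zero_le_one⟩; rwa [hφ0] at this
  have h1 : ρ'.1 1 = ρ.1 1 := by
    have := hφeq 1 ⟨zero_le_one, le_refl 1⟩; rwa [hφone] at this
  show XiS b (ρ'.1 0).2 (ρ'.1 1).2 (s:ℝ) (ρ'.1 t)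
      = XiS b (ρ.1 0).2 (ρ.1 1).2 (s:ℝ) (ρ.1 (φ t))
  rw [h0, h1, hφeq t ht]

set_option maxHeartbeats 1000000 in
lemma FF_cont_s (hb : IsBump b) (ρ : RopeEmb 1) :
    Continuous fun s : I => Quot.mk (ReparamRel 1) (FF hb ρ s) := by
  apply continuous_quot_mk.comp
  apply Continuous.subtype_mk
  apply ContinuousMap.continuous_of_continuous_uncurry
  show Continuous fun q : I × ℝ =>
    XiS b ((ρ.1 : C(ℝ, Amb)) 0).2 (ρ.1 1).2 ((q.1 : I) : ℝ) (ρ.1 q.2)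
  exact (XiS_cont4 hb).comp
    ((continuous_const : Continuous fun _ : I × ℝ => (((ρ.1 : C(ℝ, Amb)) 0).2,
        ((ρ.1 : C(ℝ, Amb)) 1).2)).prodMk
      ((continuous_subtype_val.comp continuous_fst).prodMk
        (ρ.1.continuous.comp continuous_snd)))

/-- The homotopy of shrinking maps, descended to the space of unparametrized ropes. -/
def Gc (hb : IsBump b) : RopeSpace 1 → C(I, RopeSpace 1) :=
  Quot.lift (fun ρ => ⟨fun s => Quot.mk _ (FF hb ρ s), FF_cont_s hb ρ⟩)
    (fun _ _ h => ContinuousMap.ext fun s => Quot.sound (FF_rel hb h s))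

set_option maxHeartbeats 1000000 in
lemma Gc_continuous (hb : IsBump b) : Continuous (Gc hb) := by
  apply continuous_quot_lift
  apply ContinuousMap.continuous_of_continuous_uncurry
  apply continuous_quot_mk.comp
  apply Continuous.subtype_mk
  apply ContinuousMap.continuous_of_continuous_uncurry
  show Continuous fun q : (RopeEmb 1 × I) × ℝ =>
    XiS b ((q.1.1.1 : C(ℝ, Amb)) 0).2 ((q.1.1.1 : C(ℝ, Amb)) 1).2 ((q.1.2 : I) : ℝ)
      ((q.1.1.1 : C(ℝ, Amb)) q.2)
  have hval : Continuous fun p : RopeEmb 1 × I => (p.1.1 : C(ℝ, Amb)) :=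
    continuous_subtype_val.comp continuous_fst
  exact (XiS_cont4 hb).comp
    ((((((ContinuousEvalConst.continuous_eval_const (0:ℝ)).comp
          (hval.comp continuous_fst)).snd).prodMk
        (((ContinuousEvalConst.continuous_eval_const (1:ℝ)).comp
          (hval.comp continuous_fst)).snd))).prodMk
      (((continuous_subtype_val.comp (continuous_snd.comp continuous_fst))).prodMk
        (ContinuousEval.continuous_eval.comp
          ((hval.comp continuous_fst).prodMk continuous_snd))))

lemma Gc_mk (hb : IsBump b) (ρ : RopeEmb 1) (s : I) :
    Gc hb (Quot.mk (ReparamRel 1) ρ) s = Quot.mk (ReparamRel 1) (FF hb ρ s) := rfl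

lemma Gc_one (hb : IsBump b) (r : RopeSpace 1) : Gc hb r 1 = r := by
  induction r using Quot.ind with
  | _ ρ =>
    show Quot.mk _ (FF hb ρ 1) = Quot.mk _ ρ
    refine congrArg _ (Subtype.ext (ContinuousMap.ext fun t => ?_))
    show XiS b (ρ.1 0).2 (ρ.1 1).2 ((1:I):ℝ) (ρ.1 t) = ρ.1 t
    exact XiS_one _ _ _

lemma red_transfer (hb : IsBump b) (r : RopeSpace 1) (s : I)
    (h : ∃ t ∈ Ioo (0:ℝ) 1, r.ReducibleAt t) :
    ∃ t ∈ Ioo (0:ℝ) 1, (Gc hb r s).ReducibleAt t := by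
  obtain ⟨t, ht, ρ, hρ, hpar⟩ := h
  subst hρ
  exact ⟨t, ht, FF hb ρ s, rfl, hpar⟩

lemma srz_transfer (hb : IsBump b) (r : RopeSpace 1) (s : I)
    (h : r.StronglyReducibleAtZero) : (Gc hb r s).StronglyReducibleAtZero := by
  obtain ⟨ρ, hρ, ε, hε, q, him⟩ := h
  subst hρ
  refine ⟨FF hb ρ s, rfl, min ε (1/3), lt_min hε (by norm_num),
    ((1 - (1 - (s:ℝ)) / 2) - (1 - (s:ℝ)) / 2) • q, ?_⟩
  have hq0 : (ρ.1 0).2 = q := by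
    have hm : ρ.1 0 ∈ Ico (0:ℝ) ε ×ˢ ({q} : Set Plane) := by
      rw [← him]
      refine ⟨mem_image_of_mem _ (left_mem_Icc.2 zero_le_one), ?_, trivial⟩
      show (ρ.1 0).1 ∈ Iio ε
      rw [ρ.2.2.1]; exact hε
    exact hm.2
  apply Subset.antisymm
  · rintro ⟨x, v⟩ ⟨⟨u, hu, huv⟩, hxε, -⟩
    have hx1 : (ρ.1 u).1 = x := by simpa only [FF_coe, XiS_fst] using congrArg Prod.fst huv
    replace hxε : x < min ε (1/3) := hxε
    have hmem2 : ρ.1 u ∈ ρ.1 '' Icc 0 1 ∩ Iio ε ×ˢ (univ : Set Plane) := by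
      refine ⟨mem_image_of_mem _ hu, ?_, trivial⟩
      show (ρ.1 u).1 ∈ Iio ε
      rw [hx1]; exact lt_of_lt_of_le hxε (min_le_left _ _)
    rw [him] at hmem2
    obtain ⟨⟨hge, _⟩, hqmem⟩ := hmem2
    have hqu : (ρ.1 u).2 = q := hqmem
    have hb0 : b ((ρ.1 u).1) = 0 := by
      apply hb.2.2.1
      rw [hx1]; exact lt_of_lt_of_le hxε (min_le_right _ _)
    have hv : v = ((1 - (1 - (s:ℝ)) / 2) - (1 - (s:ℝ)) / 2) • q := by
      have h2 : (1 - (1 - (s:ℝ)) / 2) • (ρ.1 u).2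
          + ((1 - (s:ℝ)) / 2) • cfun b (ρ.1 0).2 (ρ.1 1).2 (ρ.1 u).1 = v := by
        simpa only [FF_coe, XiS_snd] using congrArg Prod.snd huv
      rw [← h2, hqu]
      unfold cfun
      rw [hb0, hq0]
      module
    refine ⟨⟨?_, hxε⟩, hv⟩
    rw [← hx1]; exact hge
  · rintro ⟨x, v⟩ ⟨⟨hx0, hxlt⟩, hv⟩
    have hv' : v = ((1 - (1 - (s:ℝ)) / 2) - (1 - (s:ℝ)) / 2) • q := hv
    have hmem : ((x, q) : Amb) ∈ Ico (0:ℝ) ε ×ˢ ({q} : Set Plane) :=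
      ⟨⟨hx0, lt_of_lt_of_le hxlt (min_le_left _ _)⟩, rfl⟩
    rw [← him] at hmem
    obtain ⟨⟨u, hu, hρu⟩, -⟩ := hmem
    refine ⟨⟨u, hu, ?_⟩, hxlt, trivial⟩
    show XiS b (ρ.1 0).2 (ρ.1 1).2 (s:ℝ) (ρ.1 u) = (x, v)
    rw [hρu]
    refine Prod.ext rfl ?_
    show (1 - (1 - (s:ℝ)) / 2) • q + ((1 - (s:ℝ)) / 2) • cfun b (ρ.1 0).2 (ρ.1 1).2 x = v
    rw [hv']
    unfold cfun
    rw [hb.2.2.1 x (lt_of_lt_of_le hxlt (min_le_right _ _)), hq0]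
    module

lemma FF_std (hb : IsBump b) {ρ : RopeEmb 1} (h0 : ρ.1 0 = ((0:ℝ), (0:Plane)))
    (h1 : ρ.1 1 = ((1:ℝ), (0:Plane))) (s : I) :
    (FF hb ρ s).1 0 = ((0:ℝ), (0:Plane)) ∧ (FF hb ρ s).1 1 = ((1:ℝ), (0:Plane)) := by
  have hc : ∀ x : ℝ, cfun b (0:Plane) (0:Plane) x = 0 := by
    intro x; unfold cfun; simp
  constructor
  · show XiS b (ρ.1 0).2 (ρ.1 1).2 (s:ℝ) (ρ.1 0) = _
    rw [h0, h1]
    refine Prod.ext rfl ?_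
    show (1 - (1 - (s:ℝ)) / 2) • (0:Plane)
        + ((1 - (s:ℝ)) / 2) • cfun b (0:Plane) (0:Plane) 0 = 0
    rw [hc]; simp
  · show XiS b (ρ.1 0).2 (ρ.1 1).2 (s:ℝ) (ρ.1 1) = _
    rw [h0, h1]
    refine Prod.ext rfl ?_
    show (1 - (1 - (s:ℝ)) / 2) • (0:Plane)
        + ((1 - (s:ℝ)) / 2) • cfun b (0:Plane) (0:Plane) 1 = 0
    rw [hc]; simp

lemma FF_zero_endpoints (hb : IsBump b) (ρ : RopeEmb 1) :
    (FF hb ρ 0).1 0 = ((0:ℝ), (0:Plane)) ∧ (FF hb ρ 0).1 1 = ((1:ℝ), (0:Plane)) := by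
  have h0 : (ρ.1 0).1 = 0 := ρ.2.2.1
  have h1 : (ρ.1 1).1 = 1 := ρ.2.2.2.1
  have hb0 : b ((ρ.1 0).1) = 0 := by rw [h0]; exact hb.2.2.1 0 (by norm_num)
  have hb1 : b ((ρ.1 1).1) = 1 := by rw [h1]; exact hb.2.2.2 1 (by norm_num)
  constructor
  · show XiS b (ρ.1 0).2 (ρ.1 1).2 ((0:I):ℝ) (ρ.1 0) = _
    refine Prod.ext h0 ?_
    show (1 - (1 - ((0:I):ℝ)) / 2) • (ρ.1 0).2
        + ((1 - ((0:I):ℝ)) / 2) • cfun b (ρ.1 0).2 (ρ.1 1).2 ((ρ.1 0).1) = 0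
    unfold cfun
    rw [hb0]
    show (1 - (1 - (0:ℝ)) / 2) • (ρ.1 0).2
        + ((1 - (0:ℝ)) / 2) • (-(((1:ℝ) - 0) • (ρ.1 0).2) - (0:ℝ) • (ρ.1 1).2) = 0
    module
  · show XiS b (ρ.1 0).2 (ρ.1 1).2 ((0:I):ℝ) (ρ.1 1) = _
    refine Prod.ext h1 ?_
    show (1 - (1 - ((0:I):ℝ)) / 2) • (ρ.1 1).2
        + ((1 - ((0:I):ℝ)) / 2) • cfun b (ρ.1 0).2 (ρ.1 1).2 ((ρ.1 1).1) = 0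
    unfold cfun
    rw [hb1]
    show (1 - (1 - (0:ℝ)) / 2) • (ρ.1 1).2
        + ((1 - (0:ℝ)) / 2) • (-(((1:ℝ) - 1) • (ρ.1 0).2) - (1:ℝ) • (ρ.1 1).2) = 0
    module

/-- The map `r ↦ Ξ_r(r) : W → W'`. -/
def XiMap (hb : IsBump b) : C(WSpace, WPrime) :=
  ⟨fun w => ⟨⟨⟨Gc hb w.1.1 0, red_transfer hb w.1.1 0 w.1.2⟩,
      srz_transfer hb w.1.1 0 w.2⟩, by
        obtain ⟨ρ, hρ⟩ := Quot.exists_rep w.1.1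
        show (Gc hb w.1.1 0).StdEndpoints
        rw [← hρ]
        exact ⟨FF hb ρ 0, rfl, (FF_zero_endpoints hb ρ).1, (FF_zero_endpoints hb ρ).2⟩⟩,
    by
      apply Continuous.subtype_mk
      apply Continuous.subtype_mk
      apply Continuous.subtype_mk
      exact (ContinuousEvalConst.continuous_eval_const (0:I)).comp
        ((Gc_continuous hb).comp (continuous_subtype_val.comp continuous_subtype_val))⟩

/-- The homotopy between `Ξ` and the identity on `W`. -/
def Hmap (hb : IsBump b) : C(I × WSpace, WSpace) :=
  ⟨fun p => ⟨⟨Gc hb p.2.1.1 p.1, red_transfer hb p.2.1.1 p.1 p.2.1.2⟩,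
      srz_transfer hb p.2.1.1 p.1 p.2.2⟩,
    by
      apply Continuous.subtype_mk
      apply Continuous.subtype_mk
      exact ContinuousEval.continuous_eval.comp
        (((Gc_continuous hb).comp ((continuous_subtype_val : Continuous (Subtype.val : RSpace 1 → RopeSpace 1)).comp
          ((continuous_subtype_val : Continuous (Subtype.val : WSpace → RSpace 1)).comp continuous_snd))).prodMk continuous_fst)⟩

/-- The homotopy between `Ξ` and the identity on `W'`. -/
def Hmap' (hb : IsBump b) : C(I × WPrime, WPrime) :=
  ⟨fun p => ⟨⟨⟨Gc hb p.2.1.1.1 p.1, red_transfer hb p.2.1.1.1 p.1 p.2.1.1.2⟩,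
      srz_transfer hb p.2.1.1.1 p.1 p.2.1.2⟩, by
        obtain ⟨ρ, hρ, he0, he1⟩ := p.2.2
        show (Gc hb p.2.1.1.1 p.1).StdEndpoints
        rw [← hρ]
        exact ⟨FF hb ρ p.1, rfl, (FF_std hb he0 he1 p.1).1, (FF_std hb he0 he1 p.1).2⟩⟩,
    by
      apply Continuous.subtype_mk
      apply Continuous.subtype_mk
      apply Continuous.subtype_mk
      exact ContinuousEval.continuous_eval.comp
        (((Gc_continuous hb).comp ((continuous_subtype_val : Continuous (Subtype.val : RSpace 1 → RopeSpace 1)).comp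
          ((continuous_subtype_val : Continuous (Subtype.val : WSpace → RSpace 1)).comp
            ((continuous_subtype_val : Continuous (Subtype.val : WPrime → WSpace)).comp
              continuous_snd)))).prodMk continuous_fst)⟩

end Stmt8


theorem Wprime_inclusion_is_homotopy_equivalence :
    ∀ b : ℝ → ℝ, IsBump b →
    ∃ Xi : C(WSpace, WPrime),
      -- `Xi` is the map `r ↦ Ξ_r(r)`
      (∀ (w : WSpace) (ρ ρ' : RopeEmb 1), Quot.mk _ ρ = w.1.1 →
        (∀ t ∈ Icc (0:ℝ) 1, ρ'.1 t = XiFun (ρ.1 0).2 (ρ.1 1).2 b (ρ.1 t)) →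
        Quot.mk _ ρ' = (Xi w).1.1.1) ∧
      -- and it is a homotopy inverse to the inclusion
      (WInclusion.comp Xi).Homotopic (ContinuousMap.id WSpace) ∧
      (Xi.comp WInclusion).Homotopic (ContinuousMap.id WPrime) := by
  intro b hb
  refine ⟨Stmt8.XiMap hb, ?_, ?_, ?_⟩
  · intro w ρ ρ' hρ hρ'
    show Quot.mk _ ρ' = Stmt8.Gc hb w.1.1 0
    rw [← hρ]
    show Quot.mk _ ρ' = Quot.mk _ (Stmt8.FF hb ρ 0)
    apply Quot.sound
    refine ⟨id, contDiffOn_id, strictMonoOn_id, fun x hx => hx, rfl, rfl, ?_, ?_⟩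
    · intro t ht
      rw [derivWithin_id t _ ((uniqueDiffOn_Icc zero_lt_one) t ht)]
      exact one_ne_zero
    · intro t ht
      rw [hρ' t ht]
      exact (Stmt8.XiS_zero _ _ _).symm
  · exact ⟨⟨Stmt8.Hmap hb, fun w => rfl,
      fun w => Subtype.ext (Subtype.ext (Stmt8.Gc_one hb w.1.1))⟩⟩
  · exact ⟨⟨Stmt8.Hmap' hb, fun w => rfl,
      fun w => Subtype.ext (Subtype.ext (Subtype.ext (Stmt8.Gc_one hb w.1.1.1)))⟩⟩
end
end

section
/- Every rope r ⊂ ℝ¹ × D² of arclength strictly less than 3 is reducible at some t ∈ (0,1): there exists t ∈ (0,1) such that r intersects {t} × D² transversely in exactly one point. -/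
/- Common geometric setup: the ambient space `ℝ¹ × ℝ²`, with the open unit disk `D²`
in the second factor. -/

noncomputable section

open Set Topology unitInterval
open scoped ContDiff

/-!
STATEMENT 16: Every rope `r ⊂ ℝ¹ × D²` of arclength strictly less than `3` is
reducible at some `t ∈ (0,1)`: there is `t ∈ (0,1)` such that `r` intersects
`{t} × D²` transversely in exactly one point.
-/


section ShortRopeAux
open Filter MeasureTheory ENNReal


private lemma aux_slope_nonneg {f : ℝ → ℝ} {a d : ℝ} {S : Set ℝ}
    (hd : HasDerivWithinAt f d (Icc 0 1) a) (hS : S ⊆ Icc 0 1 \ {a})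
    (hne : (𝓝[S] a).NeBot) (hpos : ∀ u ∈ S, 0 ≤ slope f a u) : 0 ≤ d := by
  have h := (hasDerivWithinAt_iff_tendsto_slope.1 hd).mono_left (nhdsWithin_mono a hS)
  exact ge_of_tendsto h (eventually_nhdsWithin_of_forall hpos)

private lemma aux_exists_slope_pos {f : ℝ → ℝ} {a d : ℝ} {S : Set ℝ}
    (hd : HasDerivWithinAt f d (Icc 0 1) a) (hS : S ⊆ Icc 0 1 \ {a})
    (hne : (𝓝[S] a).NeBot) (hd0 : 0 < d) {U : Set ℝ} (hU : U ∈ 𝓝 a) :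
    ∃ p ∈ S ∩ U, 0 < slope f a p := by
  have h := (hasDerivWithinAt_iff_tendsto_slope.1 hd).mono_left (nhdsWithin_mono a hS)
  have h1 : ∀ᶠ p in 𝓝[S] a, 0 < slope f a p := h.eventually (eventually_gt_nhds hd0)
  have h2 : ∀ᶠ p in 𝓝[S] a, p ∈ U := eventually_nhdsWithin_of_eventually_nhds
    (eventually_of_mem hU (fun x hx => hx))
  have h3 : ∀ᶠ p in 𝓝[S] a, p ∈ S := eventually_mem_nhdsWithin
  obtain ⟨p, hp1, hp2, hp3⟩ := (h1.and (h2.and h3)).exists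
  exact ⟨p, ⟨hp3, hp2⟩, hp1⟩

private lemma aux_neBot {a b : ℝ} (hab : a < b) : (𝓝[Ico a b] b).NeBot := by
  rw [← mem_closure_iff_nhdsWithin_neBot]
  have : b ∈ closure (Ioo a b) := by
    rw [closure_Ioo hab.ne]; exact ⟨hab.le, le_rfl⟩
  exact closure_mono Ioo_subset_Ico_self this

private lemma aux_neBot' {a b : ℝ} (hab : a < b) : (𝓝[Ioc a b] a).NeBot := by
  rw [← mem_closure_iff_nhdsWithin_neBot]
  have : a ∈ closure (Ioo a b) := by
    rw [closure_Ioo hab.ne]; exact ⟨le_rfl, hab.le⟩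
  exact closure_mono Ioo_subset_Ioc_self this

private lemma three_preimages {f : ℝ → ℝ} {t : ℝ}
    (hfc : ContinuousOn f (Icc 0 1))
    (hfd : ∀ u ∈ Icc (0:ℝ) 1, HasDerivWithinAt f (derivWithin f (Icc 0 1) u) (Icc 0 1) u)
    (hreg : ∀ u ∈ Icc (0:ℝ) 1, f u = t → derivWithin f (Icc 0 1) u ≠ 0)
    (h0 : f 0 = 0) (h1 : f 1 = 1) (ht : t ∈ Ioo (0:ℝ) 1)
    (hnot : ¬ ∃! u, u ∈ Icc (0:ℝ) 1 ∧ f u = t) :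
    ∃ u₁ u₂ u₃, u₁ ∈ Icc (0:ℝ) 1 ∧ u₂ ∈ Icc (0:ℝ) 1 ∧ u₃ ∈ Icc (0:ℝ) 1 ∧
      u₁ < u₂ ∧ u₂ < u₃ ∧ f u₁ = t ∧ f u₂ = t ∧ f u₃ = t := by
  obtain ⟨ht0, ht1⟩ := ht
  set S : Set ℝ := Icc 0 1 ∩ f ⁻¹' {t} with hSdef
  have hScl : IsClosed S := ContinuousOn.preimage_isClosed_of_isClosed hfc isClosed_Icc
    isClosed_singleton
  have hSsub : S ⊆ Icc 0 1 := inter_subset_left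
  have hSne : S.Nonempty := by
    have : t ∈ Icc (f 0) (f 1) := by rw [h0, h1]; exact ⟨ht0.le, ht1.le⟩
    obtain ⟨u, hu, hfu⟩ := intermediate_value_Icc zero_le_one hfc this
    exact ⟨u, hu, hfu⟩
  set a := sInf S with ha
  set b := sSup S with hb
  have haS : a ∈ S := hScl.csInf_mem hSne (bddBelow_Icc.mono hSsub)
  have hbS : b ∈ S := hScl.csSup_mem hSne (bddAbove_Icc.mono hSsub)
  have hfa : f a = t := haS.2
  have hfb : f b = t := hbS.2
  have haI : a ∈ Icc (0:ℝ) 1 := hSsub haS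
  have hbI : b ∈ Icc (0:ℝ) 1 := hSsub hbS
  have hab : a ≤ b := csInf_le_csSup hSne (bddBelow_Icc.mono hSsub) (bddAbove_Icc.mono hSsub)
  -- a < b, else unique preimage
  have hablt : a < b := by
    rcases hab.lt_or_eq with h | h
    · exact h
    · exfalso; apply hnot
      refine ⟨a, ⟨haI, hfa⟩, fun u ⟨huI, hfu⟩ => ?_⟩
      have huS : u ∈ S := ⟨huI, hfu⟩
      have h1' : a ≤ u := csInf_le (bddBelow_Icc.mono hSsub) huS
      have h2' : u ≤ b := le_csSup (bddAbove_Icc.mono hSsub) huS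
      rw [← h] at h2'
      exact le_antisymm h2' h1'
  -- f < t on [0, a)
  have hlt : ∀ u, 0 ≤ u → u < a → f u < t := by
    intro u hu0 hua
    have huI : u ∈ Icc (0:ℝ) 1 := ⟨hu0, hua.le.trans haI.2⟩
    by_contra hge
    push_neg at hge
    have : t ∈ Icc (f 0) (f u) := by rw [h0]; exact ⟨ht0.le, hge⟩
    obtain ⟨c, hc, hfc'⟩ := intermediate_value_Icc hu0 (hfc.mono (Icc_subset_Icc le_rfl huI.2)) this
    have hcS : c ∈ S := ⟨⟨hc.1, hc.2.trans huI.2⟩, hfc'⟩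
    exact absurd (csInf_le (bddBelow_Icc.mono hSsub) hcS) (not_le.2 (lt_of_le_of_lt hc.2 hua))
  -- f > t on (b, 1]
  have hgt : ∀ u, b < u → u ≤ 1 → t < f u := by
    intro u hbu hu1
    have huI : u ∈ Icc (0:ℝ) 1 := ⟨(hbI.1).trans hbu.le, hu1⟩
    by_contra hle
    push_neg at hle
    have : t ∈ Icc (f u) (f 1) := by rw [h1]; exact ⟨hle, ht1.le⟩
    obtain ⟨c, hc, hfc'⟩ := intermediate_value_Icc hu1 (hfc.mono (Icc_subset_Icc huI.1 le_rfl)) this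
    have hcS : c ∈ S := ⟨⟨huI.1.trans hc.1, hc.2⟩, hfc'⟩
    exact absurd (le_csSup (bddAbove_Icc.mono hSsub) hcS) (not_le.2 (lt_of_lt_of_le hbu hc.1))
  have ha0 : 0 < a := by
    rcases haI.1.lt_or_eq with h | h
    · exact h
    · exfalso; rw [← h, h0] at hfa; exact absurd hfa ht0.ne
  have hb1 : b < 1 := by
    rcases hbI.2.lt_or_eq with h | h
    · exact h
    · exfalso; rw [h, h1] at hfb; exact absurd hfb ht1.ne'
  have ha1 : a < 1 := lt_of_lt_of_le hablt hbI.2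
  have hb0 : 0 < b := lt_of_le_of_lt haI.1 hablt
  -- derivative at a is positive
  have hda := hfd a haI
  have hda0 := hreg a haI hfa
  have hSa : Ico 0 a ⊆ Icc 0 1 \ {a} := fun u hu =>
    ⟨⟨hu.1, hu.2.le.trans haI.2⟩, fun h => absurd (h ▸ hu.2) (lt_irrefl _)⟩
  have hnea : (𝓝[Ico 0 a] a).NeBot := aux_neBot ha0
  have hdapos : 0 < derivWithin f (Icc 0 1) a := by
    rcases (aux_slope_nonneg hda hSa hnea (fun u hu => by
      rw [slope_def_field]
      exact div_nonneg_iff.2 (Or.inr ⟨by rw [hfa]; exact (sub_nonpos.2 (hlt u hu.1 hu.2).le),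
        sub_nonpos.2 hu.2.le⟩))).lt_or_eq with h | h
    · exact h
    · exact absurd h.symm hda0
  -- derivative at b is positive
  have hdb := hfd b hbI
  have hdb0 := hreg b hbI hfb
  have hSb : Ioc b 1 ⊆ Icc 0 1 \ {b} := fun u hu =>
    ⟨⟨hbI.1.trans hu.1.le, hu.2⟩, fun h => absurd (h ▸ hu.1) (lt_irrefl _)⟩
  have hneb : (𝓝[Ioc b 1] b).NeBot := aux_neBot' hb1
  have hdbpos : 0 < derivWithin f (Icc 0 1) b := by
    rcases (aux_slope_nonneg hdb hSb hneb (fun u hu => by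
      rw [slope_def_field]
      apply div_nonneg
      · rw [hfb]; exact (sub_nonneg.2 (hgt u hu.1 hu.2).le)
      · exact sub_nonneg.2 hu.1.le)).lt_or_eq with h | h
    · exact h
    · exact absurd h.symm hdb0
  -- get p slightly right of a with f p > t
  set m := (a + b) / 2 with hm
  have ham : a < m := by rw [hm]; linarith
  have hmb : m < b := by rw [hm]; linarith
  have hSa' : Ioc a 1 ⊆ Icc 0 1 \ {a} := fun u hu =>
    ⟨⟨haI.1.trans hu.1.le, hu.2⟩, fun h => absurd (h ▸ hu.1) (lt_irrefl _)⟩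
  have hnea' : (𝓝[Ioc a 1] a).NeBot := aux_neBot' ha1
  obtain ⟨p, ⟨hp1, hp2⟩, hp3⟩ := aux_exists_slope_pos hda hSa' hnea' hdapos (Iio_mem_nhds ham)
  have hfp : t < f p := by
    rw [slope_def_field] at hp3
    rcases div_pos_iff.1 hp3 with ⟨h', _⟩ | ⟨_, h'⟩
    · rw [hfa] at h'; linarith
    · exfalso; exact absurd (sub_neg.1 h') (not_lt.2 hp1.1.le)
  -- get q slightly left of b with f q < t
  have hSb' : Ico 0 b ⊆ Icc 0 1 \ {b} := fun u hu =>
    ⟨⟨hu.1, hu.2.le.trans hbI.2⟩, fun h => absurd (h ▸ hu.2) (lt_irrefl _)⟩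
  have hneb' : (𝓝[Ico 0 b] b).NeBot := aux_neBot hb0
  obtain ⟨q, ⟨hq1, hq2⟩, hq3⟩ := aux_exists_slope_pos hdb hSb' hneb' hdbpos (Ioi_mem_nhds hmb)
  have hfq : f q < t := by
    rw [slope_def_field] at hq3
    rcases div_pos_iff.1 hq3 with ⟨_, h'⟩ | ⟨h', _⟩
    · exfalso; exact absurd (sub_pos.1 h') (not_lt.2 hq1.2.le)
    · rw [hfb] at h'; linarith
  have hpq : p < q := lt_trans hp2 hq2
  have hpI : p ∈ Icc (0:ℝ) 1 := ⟨haI.1.trans hp1.1.le, hp1.2⟩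
  have hqI : q ∈ Icc (0:ℝ) 1 := ⟨hq1.1, hq1.2.le.trans hbI.2⟩
  obtain ⟨c, hc, hfcc⟩ := intermediate_value_Ioo' hpq.le
    (hfc.mono (Icc_subset_Icc hpI.1 hqI.2)) (⟨hfq, hfp⟩ : t ∈ Ioo (f q) (f p))
  have hac : a < c := lt_trans hp1.1 hc.1
  have hcb : c < b := lt_trans hc.2 hq1.2
  exact ⟨a, c, b, haI, ⟨haI.1.trans hac.le, hcb.le.trans hbI.2⟩, hbI, hac, hcb, hfa, hfcc, hfb⟩


private lemma aux_subinterval {u : ℝ} (hu : u ∈ Icc (0:ℝ) 1) {k : ℕ} (hk : 1 ≤ k) :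
    ∃ i : ℕ, i < k ∧ u ∈ Icc ((i:ℝ)/k) (((i:ℝ)+1)/k) := by
  have hkpos : (0:ℝ) < k := by exact_mod_cast hk
  rcases eq_or_lt_of_le hu.2 with h | h
  · refine ⟨k - 1, Nat.sub_lt hk one_pos, ?_⟩
    have : ((k - 1 : ℕ) : ℝ) = (k : ℝ) - 1 := by
      push_cast [Nat.cast_sub hk]; ring
    rw [this, h]
    constructor
    · rw [div_le_one hkpos]; linarith
    · rw [le_div_iff₀ hkpos]; linarith
  · refine ⟨⌊u * k⌋₊, ?_, ?_, ?_⟩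
    · rw [Nat.floor_lt (mul_nonneg hu.1 hkpos.le)]
      calc u * k < 1 * k := by nlinarith
        _ = k := one_mul _
    · rw [div_le_iff₀ hkpos]
      exact Nat.floor_le (mul_nonneg hu.1 hkpos.le)
    · rw [le_div_iff₀ hkpos]
      exact (Nat.lt_floor_add_one (u * k)).le

private lemma aux_partition_sum (f : ℝ → ℝ) {k : ℕ} (hk : 1 ≤ k) :
    ∑ i ∈ Finset.range k, eVariationOn f (Icc 0 1 ∩ Icc ((i:ℝ)/k) (((i:ℝ)+1)/k)) =
      eVariationOn f (Icc 0 1) := by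
  have hkpos : (0:ℝ) < k := by exact_mod_cast hk
  have key : ∀ j : ℕ, j ≤ k →
      ∑ i ∈ Finset.range j, eVariationOn f (Icc 0 1 ∩ Icc ((i:ℝ)/k) (((i:ℝ)+1)/k)) =
      eVariationOn f (Icc 0 1 ∩ Icc 0 ((j:ℝ)/k)) := by
    intro j hj
    induction j with
    | zero =>
      simp only [Finset.range_zero, Finset.sum_empty, Nat.cast_zero, zero_div]
      refine (eVariationOn.subsingleton f ?_).symm
      intro x hx y hy
      have hx' : x = 0 := le_antisymm hx.2.2 hx.1.1
      have hy' : y = 0 := le_antisymm hy.2.2 hy.1.1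
      rw [hx', hy']
    | succ j ih =>
      have hj' : j ≤ k := Nat.le_of_succ_le hj
      rw [Finset.sum_range_succ, ih hj']
      have h1 : (0:ℝ) ≤ (j:ℝ)/k := by positivity
      have h2 : (j:ℝ)/k ≤ ((j:ℝ)+1)/k := by
        exact (div_le_div_iff_of_pos_right hkpos).mpr (by linarith)
      have hjI : (j:ℝ)/k ∈ Icc (0:ℝ) 1 := by
        refine ⟨h1, ?_⟩
        rw [div_le_one hkpos]
        exact_mod_cast hj'
      rw [eVariationOn.Icc_add_Icc f h1 h2 hjI]
      norm_num
  have := key k le_rfl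
  rw [div_self (ne_of_gt hkpos)] at this
  rw [this]
  congr 1
  rw [inter_eq_self_of_subset_left]
  intro x hx; exact ⟨hx.1, hx.2⟩


private lemma aux_volume_image_le (f : ℝ → ℝ) (hfc : ContinuousOn f (Icc 0 1))
    {J : Set ℝ} (hJ : J ⊆ Icc 0 1) (hJc : IsCompact J) (hJne : J.Nonempty) :
    volume (f '' J) ≤ eVariationOn f J := by
  obtain ⟨p, hp, hpmin⟩ := hJc.exists_isMinOn hJne (hfc.mono hJ)
  obtain ⟨q, hq, hqmax⟩ := hJc.exists_isMaxOn hJne (hfc.mono hJ)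
  have hsub : f '' J ⊆ Icc (f p) (f q) := by
    rintro _ ⟨x, hx, rfl⟩
    exact ⟨hpmin hx, hqmax hx⟩
  calc volume (f '' J) ≤ volume (Icc (f p) (f q)) := measure_mono hsub
    _ = ENNReal.ofReal (f q - f p) := by rw [Real.volume_Icc]
    _ = edist (f q) (f p) := by
        rw [edist_dist, Real.dist_eq, abs_of_nonneg (sub_nonneg.2 (hpmin hq))]
    _ ≤ eVariationOn f J := eVariationOn.edist_le f hq hp

private lemma aux_variation_ge_three (f : ℝ → ℝ) (hfc : ContinuousOn f (Icc 0 1))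
    (hae : ∀ᵐ t ∂(volume.restrict (Ioo (0:ℝ) 1)), ∃ u₁ u₂ u₃, u₁ ∈ Icc (0:ℝ) 1 ∧
      u₂ ∈ Icc (0:ℝ) 1 ∧ u₃ ∈ Icc (0:ℝ) 1 ∧ u₁ < u₂ ∧ u₂ < u₃ ∧
      f u₁ = t ∧ f u₂ = t ∧ f u₃ = t) :
    3 ≤ eVariationOn f (Icc 0 1) := by
  set V := eVariationOn f (Icc 0 1) with hV
  -- the subintervals
  set J : ℕ → ℕ → Set ℝ := fun k i => Icc 0 1 ∩ Icc ((i:ℝ)/k) (((i:ℝ)+1)/k) with hJ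
  have hJsub : ∀ k i, J k i ⊆ Icc 0 1 := fun k i => inter_subset_left
  have hJcomp : ∀ k i, IsCompact (J k i) := fun k i => isCompact_Icc.inter_right isClosed_Icc
  -- counting functions
  set g : ℕ → ℝ → ℝ≥0∞ := fun k t =>
    ∑ i ∈ Finset.range k, (f '' J k i).indicator 1 t with hg
  have hmeasim : ∀ k i, MeasurableSet (f '' J k i) := fun k i =>
    (((hJcomp k i).image_of_continuousOn (hfc.mono (hJsub k i)))).measurableSet
  have hmeas : ∀ k, Measurable (g k) := fun k =>
    Finset.measurable_sum _ (fun i _ => measurable_one.indicator (hmeasim k i))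
  -- integral bound
  have hint : ∀ k, 1 ≤ k → ∫⁻ t, g k t ≤ V := by
    intro k hk
    rw [hg]
    simp only
    rw [lintegral_finset_sum _ (fun i _ => measurable_one.indicator (hmeasim k i))]
    have : ∀ i ∈ Finset.range k, ∫⁻ t, (f '' J k i).indicator 1 t ≤ eVariationOn f (J k i) := by
      intro i hi
      rw [lintegral_indicator_one (hmeasim k i)]
      refine aux_volume_image_le f hfc (hJsub k i) (hJcomp k i) ⟨(i:ℝ)/k, ?_, le_rfl, ?_⟩
      · have hkpos : (0:ℝ) < k := by exact_mod_cast hk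
        have hik : (i:ℝ) ≤ (k:ℝ) := by
          exact_mod_cast (Finset.mem_range.1 hi).le
        exact ⟨by positivity, by rw [div_le_one hkpos]; exact hik⟩
      · have hkpos : (0:ℝ) < k := by exact_mod_cast hk
        exact (div_le_div_iff_of_pos_right hkpos).mpr (by linarith)
    calc ∑ i ∈ Finset.range k, ∫⁻ t, (f '' J k i).indicator 1 t
        ≤ ∑ i ∈ Finset.range k, eVariationOn f (J k i) := Finset.sum_le_sum this
      _ = V := aux_partition_sum f hk
  -- pointwise liminf bound
  have hptwise : ∀ᵐ t ∂(volume.restrict (Ioo (0:ℝ) 1)),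
      (3:ℝ≥0∞) ≤ liminf (fun k => g k t) atTop := by
    filter_upwards [hae] with t ht
    obtain ⟨u₁, u₂, u₃, hu₁, hu₂, hu₃, h12, h23, hf1, hf2, hf3⟩ := ht
    obtain ⟨k₁, hk₁⟩ := exists_nat_one_div_lt (sub_pos.2 h12)
    obtain ⟨k₂, hk₂⟩ := exists_nat_one_div_lt (sub_pos.2 h23)
    have hev : ∀ᶠ k in atTop, (3:ℝ≥0∞) ≤ g k t := by
      rw [eventually_atTop]
      refine ⟨max (k₁+1) (k₂+1), fun k hk => ?_⟩
      have hk1 : 1 ≤ k := le_trans (le_trans (Nat.le_add_left 1 k₁) (le_max_left _ _)) hk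
      have hkpos : (0:ℝ) < k := by exact_mod_cast hk1
      have hgap1 : (1:ℝ)/k < u₂ - u₁ := by
        apply lt_of_le_of_lt _ hk₁
        apply one_div_le_one_div_of_le (by positivity)
        have : k₁ + 1 ≤ k := le_trans (le_max_left _ _) hk
        exact_mod_cast this
      have hgap2 : (1:ℝ)/k < u₃ - u₂ := by
        apply lt_of_le_of_lt _ hk₂
        apply one_div_le_one_div_of_le (by positivity)
        have : k₂ + 1 ≤ k := le_trans (le_max_right _ _) hk
        exact_mod_cast this
      obtain ⟨i₁, hi₁k, hi₁⟩ := aux_subinterval hu₁ hk1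
      obtain ⟨i₂, hi₂k, hi₂⟩ := aux_subinterval hu₂ hk1
      obtain ⟨i₃, hi₃k, hi₃⟩ := aux_subinterval hu₃ hk1
      have hwidth : ∀ i : ℕ, ∀ x y : ℝ, x ∈ Icc ((i:ℝ)/k) (((i:ℝ)+1)/k) →
          y ∈ Icc ((i:ℝ)/k) (((i:ℝ)+1)/k) → y - x ≤ 1/k := by
        intro i x y hx hy
        have : ((i:ℝ)+1)/k - (i:ℝ)/k = 1/k := by field_simp; ring
        have h1 := hx.1; have h2 := hy.2
        linarith [this]
      have hne12 : i₁ ≠ i₂ := by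
        intro h; rw [h] at hi₁
        exact absurd (hwidth i₂ u₁ u₂ hi₁ hi₂) (not_le.2 hgap1)
      have hne23 : i₂ ≠ i₃ := by
        intro h; rw [h] at hi₂
        exact absurd (hwidth i₃ u₂ u₃ hi₂ hi₃) (not_le.2 hgap2)
      have hne13 : i₁ ≠ i₃ := by
        intro h; rw [h] at hi₁
        have h13 : u₃ - u₁ ≤ 1/k := hwidth i₃ u₁ u₃ hi₁ hi₃
        have : (1:ℝ)/k < u₃ - u₁ := by linarith
        linarith
      have hsubset : ({i₁, i₂, i₃} : Finset ℕ) ⊆ Finset.range k := by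
        intro i hi
        simp only [Finset.mem_insert, Finset.mem_singleton] at hi
        rcases hi with rfl | rfl | rfl
        · exact Finset.mem_range.2 hi₁k
        · exact Finset.mem_range.2 hi₂k
        · exact Finset.mem_range.2 hi₃k
      have ht1 : t ∈ f '' J k i₁ := ⟨u₁, ⟨hu₁, hi₁⟩, hf1⟩
      have ht2 : t ∈ f '' J k i₂ := ⟨u₂, ⟨hu₂, hi₂⟩, hf2⟩
      have ht3 : t ∈ f '' J k i₃ := ⟨u₃, ⟨hu₃, hi₃⟩, hf3⟩
      have hsum3 : ∑ i ∈ ({i₁, i₂, i₃} : Finset ℕ), (f '' J k i).indicator 1 t = (3:ℝ≥0∞) := by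
        rw [Finset.sum_insert (by simp [hne12, hne13]),
          Finset.sum_insert (by simp [hne23]), Finset.sum_singleton,
          Set.indicator_of_mem ht1, Set.indicator_of_mem ht2, Set.indicator_of_mem ht3]
        norm_num
      calc (3:ℝ≥0∞) = ∑ i ∈ ({i₁, i₂, i₃} : Finset ℕ), (f '' J k i).indicator 1 t := hsum3.symm
        _ ≤ g k t := Finset.sum_le_sum_of_subset hsubset
    calc (3:ℝ≥0∞) = liminf (fun _ : ℕ => (3:ℝ≥0∞)) atTop := (liminf_const _).symm
      _ ≤ liminf (fun k => g k t) atTop := liminf_le_liminf hev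
  -- putting it together
  have hvol : volume (Ioo (0:ℝ) 1) = 1 := by rw [Real.volume_Ioo]; norm_num
  calc (3:ℝ≥0∞) = 3 * volume (Ioo (0:ℝ) 1) := by rw [hvol, mul_one]
    _ = ∫⁻ _ in Ioo (0:ℝ) 1, (3:ℝ≥0∞) := by
        rw [setLIntegral_const]
    _ ≤ ∫⁻ t in Ioo (0:ℝ) 1, liminf (fun k => g k t) atTop := lintegral_mono_ae hptwise
    _ ≤ liminf (fun k => ∫⁻ t in Ioo (0:ℝ) 1, g k t) atTop :=
        lintegral_liminf_le (fun k => hmeas k)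
    _ ≤ liminf (fun _ : ℕ => V) atTop :=
        liminf_le_liminf (by
          rw [eventually_atTop]
          exact ⟨1, fun k hk => le_trans (lintegral_mono' Measure.restrict_le_self le_rfl)
            (hint k hk)⟩)
    _ = V := liminf_const _


end ShortRopeAux

open MeasureTheory

theorem short_rope_is_reducible (ρ : ℝ → Amb) (hemb : SmoothEmbOn ρ (Icc 0 1))
    (h0 : (ρ 0).1 = 0) (h1 : (ρ 1).1 = 1)
    (hdisk : ∀ t ∈ Icc (0:ℝ) 1, ‖(ρ t).2‖ < 1)
    (hlen : eVariationOn ρ (Icc 0 1) < 3) :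
    ∃ t ∈ Ioo (0:ℝ) 1, ParamReducibleAt ρ t := by
  by_contra hcon
  push_neg at hcon
  have hf : (fun u => (ρ u).1) = fun u => (ρ u).1 := rfl
  set f : ℝ → ℝ := fun u => (ρ u).1 with hfdef
  have hsmooth : ContDiffOn ℝ ∞ f (Icc 0 1) := contDiff_fst.comp_contDiffOn hemb.1
  have hfc : ContinuousOn f (Icc 0 1) := hsmooth.continuousOn
  have hdiff : DifferentiableOn ℝ f (Icc 0 1) :=
    hsmooth.differentiableOn (by simp)
  have hfd : ∀ u ∈ Icc (0:ℝ) 1, HasDerivWithinAt f (derivWithin f (Icc 0 1) u) (Icc 0 1) u :=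
    fun u hu => (hdiff u hu).hasDerivWithinAt
  -- critical values are null (Sard in dimension 1)
  set K := {u | u ∈ Icc (0:ℝ) 1 ∧ derivWithin f (Icc 0 1) u = 0} with hK
  have hKsub : K ⊆ Icc 0 1 := fun u hu => hu.1
  have hC : volume (f '' K) = 0 := by
    apply MeasureTheory.addHaar_image_eq_zero_of_det_fderivWithin_eq_zero
      (f' := fun _ => (0 : ℝ →L[ℝ] ℝ)) volume
    · intro x hx
      have h := ((hfd x hx.1).mono hKsub)
      rw [hx.2] at h
      have h2 := h.hasFDerivWithinAt
      have e : (ContinuousLinearMap.toSpanSingleton ℝ (0:ℝ)) = 0 := by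
        ext x; simp
      rwa [e] at h2
    · intro x hx
      simp [ContinuousLinearMap.det]
  -- a.e. t in (0,1) has three preimages
  have hthree : ∀ t ∈ Ioo (0:ℝ) 1, t ∉ f '' K → ∃ u₁ u₂ u₃, u₁ ∈ Icc (0:ℝ) 1 ∧
      u₂ ∈ Icc (0:ℝ) 1 ∧ u₃ ∈ Icc (0:ℝ) 1 ∧ u₁ < u₂ ∧ u₂ < u₃ ∧
      f u₁ = t ∧ f u₂ = t ∧ f u₃ = t := by
    intro t ht htK
    have hreg : ∀ u ∈ Icc (0:ℝ) 1, f u = t → derivWithin f (Icc 0 1) u ≠ 0 := by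
      intro u hu hfu hzero
      exact htK ⟨u, ⟨hu, hzero⟩, hfu⟩
    have hnotred := hcon t ht
    have hnot : ¬ ∃! u, u ∈ Icc (0:ℝ) 1 ∧ f u = t := by
      intro hexu
      exact hnotred ⟨hexu, fun u hu hfu => hreg u hu hfu⟩
    exact three_preimages hfc hfd hreg h0 h1 ht hnot
  have hae : ∀ᵐ t ∂(volume.restrict (Ioo (0:ℝ) 1)), ∃ u₁ u₂ u₃, u₁ ∈ Icc (0:ℝ) 1 ∧
      u₂ ∈ Icc (0:ℝ) 1 ∧ u₃ ∈ Icc (0:ℝ) 1 ∧ u₁ < u₂ ∧ u₂ < u₃ ∧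
      f u₁ = t ∧ f u₂ = t ∧ f u₃ = t := by
    rw [MeasureTheory.ae_restrict_iff' measurableSet_Ioo]
    have h2 : ∀ᵐ t ∂(volume : MeasureTheory.Measure ℝ), t ∉ f '' K := by
      rw [MeasureTheory.ae_iff]
      simpa only [not_not, setOf_mem_eq] using hC
    filter_upwards [h2] with t ht htIoo
    exact hthree t htIoo ht
  have hvar3 : 3 ≤ eVariationOn f (Icc 0 1) := aux_variation_ge_three f hfc hae
  have hle : eVariationOn f (Icc 0 1) ≤ eVariationOn ρ (Icc 0 1) := by
    have hlip : LipschitzOnWith 1 (Prod.fst : Amb → ℝ) univ :=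
      LipschitzWith.prod_fst.lipschitzOnWith
    have := hlip.comp_eVariationOn_le (Set.mapsTo_univ ρ (Icc 0 1))
    simpa [hfdef, Function.comp_def] using this
  exact absurd hlen (not_lt.2 (le_trans hvar3 hle))
end
end
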